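/- The Fischer-Ladner closure of a finite set of modal μ-calculus formulas is finite. -/

import Mathlib

/-- Formulas of the modal μ-calculus in negation normal form. -/
inductive Formula : Type
  | atom : ℕ → Formula
  | natom : ℕ → Formula
  | or : Formula → Formula → Formula
  | and : Formula → Formula → Formula
  | dia : Formula → Formula
  | box : Formula → Formula
  | mu : ℕ → Formula → Formula
  | nu : ℕ → Formula → Formula
  deriving DecidableEq

namespace Formula

/-- free variables -/
def fv : Formula → Finset ℕ
  | atom p => {p}
  | natom p => {p}
  | or φ ψ => fv φ ∪ fv ψ
  | and φ ψ => fv φ ∪ fv ψ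
  | dia φ => fv φ
  | box φ => fv φ
  | mu x φ => fv φ \ {x}
  | nu x φ => fv φ \ {x}

/-- bound variables -/
def bv : Formula → Finset ℕ
  | atom _ => ∅
  | natom _ => ∅
  | or φ ψ => bv φ ∪ bv ψ
  | and φ ψ => bv φ ∪ bv ψ
  | dia φ => bv φ
  | box φ => bv φ
  | mu x φ => insert x (bv φ)
  | nu x φ => insert x (bv φ)

/-- the multiset of variables bound by binders (with multiplicity) -/
def binders : Formula → Multiset ℕ
  | atom _ => 0
  | natom _ => 0
  | or φ ψ => binders φ + binders ψ
  | and φ ψ => binders φ + binders ψ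
  | dia φ => binders φ
  | box φ => binders φ
  | mu x φ => x ::ₘ binders φ
  | nu x φ => x ::ₘ binders φ

/-- negation, keeping the variables in `X` fixed (used under fixpoint binders, where
`∼ηx.φ := η̄x.∼φ[¬x/x]`, so that the double negation on `x` cancels). -/
def negF : Finset ℕ → Formula → Formula
  | X, atom p => if p ∈ X then atom p else natom p
  | X, natom p => if p ∈ X then natom p else atom p
  | X, or φ ψ => and (negF X φ) (negF X ψ)
  | X, and φ ψ => or (negF X φ) (negF X ψ)
  | X, dia φ => box (negF X φ)
  | X, box φ => dia (negF X φ)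
  | X, mu x φ => nu x (negF (insert x X) φ)
  | X, nu x φ => mu x (negF (insert x X) φ)

/-- the negation operator `∼` on negation normal forms -/
def neg : Formula → Formula := negF ∅

/-- substitution of `ψ` for the variable `x` (formulas are assumed tidy, so that
no capture occurs; at negative occurrences the negation of `ψ` is substituted). -/
def subst : Formula → ℕ → Formula → Formula
  | atom p, x, ψ => if p = x then ψ else atom p
  | natom p, x, ψ => if p = x then neg ψ else natom p
  | or φ₁ φ₂, x, ψ => or (subst φ₁ x ψ) (subst φ₂ x ψ)
  | and φ₁ φ₂, x, ψ => and (subst φ₁ x ψ) (subst φ₂ x ψ)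
  | dia φ, x, ψ => dia (subst φ x ψ)
  | box φ, x, ψ => box (subst φ x ψ)
  | mu y φ, x, ψ => if y = x then mu y φ else mu y (subst φ x ψ)
  | nu y φ, x, ψ => if y = x then nu y φ else nu y (subst φ x ψ)

def bot : Formula := and (atom 0) (natom 0)
def top : Formula := or (atom 0) (natom 0)
def impl (φ ψ : Formula) : Formula := or (neg φ) ψ
def iffF (φ ψ : Formula) : Formula := and (impl φ ψ) (impl ψ φ)

end Formula

open Formula

/-- the Fischer-Ladner closure (as an inductively defined predicate) -/
inductive FL (Φ : Set Formula) : Formula → Prop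
  | base : ∀ {φ}, φ ∈ Φ → FL Φ φ
  | natom : ∀ {p}, FL Φ (.natom p) → FL Φ (.atom p)
  | orL : ∀ {φ ψ}, FL Φ (.or φ ψ) → FL Φ φ
  | orR : ∀ {φ ψ}, FL Φ (.or φ ψ) → FL Φ ψ
  | andL : ∀ {φ ψ}, FL Φ (.and φ ψ) → FL Φ φ
  | andR : ∀ {φ ψ}, FL Φ (.and φ ψ) → FL Φ ψ
  | dia : ∀ {φ}, FL Φ (.dia φ) → FL Φ φ
  | box : ∀ {φ}, FL Φ (.box φ) → FL Φ φ
  | mu : ∀ {x φ}, FL Φ (.mu x φ) → FL Φ (subst φ x (.mu x φ))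
  | nu : ∀ {x φ}, FL Φ (.nu x φ) → FL Φ (subst φ x (.nu x φ))

/-- `Cl Φ` : the FL-closure of `Φ` -/
def Cl (Φ : Set Formula) : Set Formula := {φ | FL Φ φ}

def FLClosed (Sg : Set Formula) : Prop := ∀ φ, FL Sg φ → φ ∈ Sg

/-- the subformula relation `⊴` -/
inductive Subf : Formula → Formula → Prop
  | refl : ∀ φ, Subf φ φ
  | orL : ∀ {φ ψ₁ ψ₂}, Subf φ ψ₁ → Subf φ (.or ψ₁ ψ₂)
  | orR : ∀ {φ ψ₁ ψ₂}, Subf φ ψ₂ → Subf φ (.or ψ₁ ψ₂)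
  | andL : ∀ {φ ψ₁ ψ₂}, Subf φ ψ₁ → Subf φ (.and ψ₁ ψ₂)
  | andR : ∀ {φ ψ₁ ψ₂}, Subf φ ψ₂ → Subf φ (.and ψ₁ ψ₂)
  | dia : ∀ {φ ψ}, Subf φ ψ → Subf φ (.dia ψ)
  | box : ∀ {φ ψ}, Subf φ ψ → Subf φ (.box ψ)
  | mu : ∀ {φ x ψ}, Subf φ ψ → Subf φ (.mu x ψ)
  | nu : ∀ {φ x ψ}, Subf φ ψ → Subf φ (.nu x ψ)

/-- strict subformula `⊲` -/
def SSubf (φ ψ : Formula) : Prop := Subf φ ψ ∧ φ ≠ ψ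

/-- a formula is tidy if its free and bound variables are disjoint -/
def Tidy (φ : Formula) : Prop := Disjoint (fv φ) (bv φ)

/-- a formula is clean if it is tidy and every bound variable has a unique binder -/
def Clean (φ : Formula) : Prop := Tidy φ ∧ (binders φ).Nodup

/-- `x` has binder `μ` in `ξ` -/
def MuVar (ξ : Formula) (x : ℕ) : Prop := ∃ δ, Subf (.mu x δ) ξ
/-- `x` has binder `ν` in `ξ` -/
def NuVar (ξ : Formula) (x : ℕ) : Prop := ∃ δ, Subf (.nu x δ) ξ

/-- base of the dependency order: `x <_ξ y` whenever `δ_x ⊲ δ_y` and `y ⊲ δ_x` -/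
def depBase (ξ : Formula) (x y : ℕ) : Prop :=
  ∃ δx δy : Formula,
    (Subf (.mu x δx) ξ ∨ Subf (.nu x δx) ξ) ∧
    (Subf (.mu y δy) ξ ∨ Subf (.nu y δy) ξ) ∧
    SSubf δx δy ∧ SSubf (.atom y) δx

/-- the dependency order `<_ξ` : the least strict partial order containing `depBase` -/
def dep (ξ : Formula) : ℕ → ℕ → Prop := Relation.TransGen (depBase ξ)

mutual
  /-- membership in the continuous modal μ-calculus `μ_cML` -/
  inductive MuC : Formula → Prop
    | atom : ∀ p, MuC (.atom p)
    | natom : ∀ p, MuC (.natom p)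
    | or : ∀ {φ ψ}, MuC φ → MuC ψ → MuC (.or φ ψ)
    | and : ∀ {φ ψ}, MuC φ → MuC ψ → MuC (.and φ ψ)
    | dia : ∀ {φ}, MuC φ → MuC (.dia φ)
    | box : ∀ {φ}, MuC φ → MuC (.box φ)
    | mu : ∀ {x φ}, ContIn ({x} : Set ℕ) φ → MuC (.mu x φ)
    | nu : ∀ {x φ}, CoconIn ({x} : Set ℕ) φ → MuC (.nu x φ)
  /-- the fragment of `μ_cML`-formulas continuous in `X` -/
  inductive ContIn : Set ℕ → Formula → Prop
    | var : ∀ {X x}, x ∈ X → ContIn X (.atom x)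
    | free : ∀ {X α}, MuC α → (∀ x ∈ X, x ∉ fv α) → ContIn X α
    | or : ∀ {X φ ψ}, ContIn X φ → ContIn X ψ → ContIn X (.or φ ψ)
    | and : ∀ {X φ ψ}, ContIn X φ → ContIn X ψ → ContIn X (.and φ ψ)
    | dia : ∀ {X φ}, ContIn X φ → ContIn X (.dia φ)
    | mu : ∀ {X y φ}, ContIn (insert y X) φ → ContIn X (.mu y φ)
  /-- the fragment of `μ_cML`-formulas cocontinuous in `X` -/
  inductive CoconIn : Set ℕ → Formula → Prop
    | var : ∀ {X x}, x ∈ X → CoconIn X (.atom x)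
    | free : ∀ {X α}, MuC α → (∀ x ∈ X, x ∉ fv α) → CoconIn X α
    | or : ∀ {X φ ψ}, CoconIn X φ → CoconIn X ψ → CoconIn X (.or φ ψ)
    | and : ∀ {X φ ψ}, CoconIn X φ → CoconIn X ψ → CoconIn X (.and φ ψ)
    | box : ∀ {X φ}, CoconIn X φ → CoconIn X (.box φ)
    | nu : ∀ {X y φ}, CoconIn (insert y X) φ → CoconIn X (.nu y φ)
end

/-- a basic modal formula: no fixpoint operators -/
def IsBasic : Formula → Prop
  | .or φ ψ => IsBasic φ ∧ IsBasic ψ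
  | .and φ ψ => IsBasic φ ∧ IsBasic ψ
  | .dia φ => IsBasic φ
  | .box φ => IsBasic φ
  | .mu _ _ => False
  | .nu _ _ => False
  | _ => True

/- ########  Semantics  ######## -/

/-- algebraic semantics: the meaning of a formula, relative to a valuation -/
def sem {S : Type} (R : S → S → Prop) : Formula → (ℕ → Set S) → Set S
  | .atom p, V => V p
  | .natom p, V => (V p)ᶜ
  | .or φ ψ, V => sem R φ V ∪ sem R ψ V
  | .and φ ψ, V => sem R φ V ∩ sem R ψ V
  | .dia φ, V => {s | ∃ t, R s t ∧ t ∈ sem R φ V}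
  | .box φ, V => {s | ∀ t, R s t → t ∈ sem R φ V}
  | .mu x φ, V => ⋂₀ {X : Set S | sem R φ (Function.update V x X) ⊆ X}
  | .nu x φ, V => ⋃₀ {X : Set S | X ⊆ sem R φ (Function.update V x X)}

/-- Kripke models -/
structure KModel where
  S : Type
  R : S → S → Prop
  V : ℕ → Set S

/-- Kripke frames -/
structure KFrame where
  S : Type
  R : S → S → Prop

def sat (M : KModel) (s : M.S) (φ : Formula) : Prop := s ∈ sem M.R φ M.V

def validM (M : KModel) (φ : Formula) : Prop := ∀ s, sat M s φ

def validF (F : KFrame) (φ : Formula) : Prop := ∀ (V : ℕ → Set F.S) (s : F.S), s ∈ sem F.R φ V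

def frameOf (M : KModel) : KFrame := ⟨M.S, M.R⟩

/- ########  Filtration  ######## -/

/-- Σ-equivalence: satisfying the same formulas of `Sg` -/
def fEquiv (M : KModel) (Sg : Finset Formula) : Setoid M.S :=
  ⟨fun s t => ∀ φ ∈ Sg, (sat M s φ ↔ sat M t φ),
   ⟨fun _ _ _ => Iff.rfl, fun h φ hφ => (h φ hφ).symm,
    fun h1 h2 φ hφ => (h1 φ hφ).trans (h2 φ hφ)⟩⟩

def FStates (M : KModel) (Sg : Finset Formula) : Type := Quotient (fEquiv M Sg)

def fcls (M : KModel) (Sg : Finset Formula) (s : M.S) : FStates M Sg :=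
  Quotient.mk (fEquiv M Sg) s

/-- a filtration of `M` through `Sg`: a relation between `R^min` and `R^max`,
with the induced valuation on atoms of `Sg` -/
structure Filtration (M : KModel) (Sg : Finset Formula) where
  R' : FStates M Sg → FStates M Sg → Prop
  V' : ℕ → Set (FStates M Sg)
  rmin : ∀ s t : M.S, M.R s t → R' (fcls M Sg s) (fcls M Sg t)
  rmax : ∀ s t : M.S, R' (fcls M Sg s) (fcls M Sg t) →
      ∀ φ, Formula.box φ ∈ Sg → sat M s (.box φ) → sat M t φ
  hv : ∀ p, Formula.atom p ∈ Sg → ∀ s : M.S, (fcls M Sg s ∈ V' p ↔ s ∈ M.V p)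

def filtModel (M : KModel) (Sg : Finset Formula) (F : Filtration M Sg) : KModel :=
  ⟨FStates M Sg, F.R', F.V'⟩

/-- a class of models admits filtration with respect to a language `D` -/
def AdmFilt (Mcl : KModel → Prop) (D : Formula → Prop) : Prop :=
  ∀ M, Mcl M → ∀ Sg : Finset Formula, FLClosed ↑Sg → (∀ φ ∈ Sg, D φ) →
    ∃ F : Filtration M Sg, Mcl (filtModel M Sg F)

/- ########  Proof systems  ######## -/

/-- propositional evaluation (modal/fixpoint formulas treated as atoms) -/
def beval (v : Formula → Bool) : Formula → Bool
  | .atom p => v (.atom p)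
  | .natom p => !v (.atom p)
  | .or φ ψ => beval v φ || beval v ψ
  | .and φ ψ => beval v φ && beval v ψ
  | φ => v φ

/-- the basic normal modal logic axiomatised by `Ax` -/
inductive BPrf (Ax : Set Formula) : Formula → Prop
  | ax : ∀ {φ}, φ ∈ Ax → BPrf Ax φ
  | taut : ∀ {φ}, (∀ v, beval v φ = true) → BPrf Ax φ
  | norm : BPrf Ax (neg (.dia bot))
  | addL : ∀ {φ ψ}, BPrf Ax (impl (.dia (.or φ ψ)) (.or (.dia φ) (.dia ψ)))
  | addR : ∀ {φ ψ}, BPrf Ax (impl (.or (.dia φ) (.dia ψ)) (.dia (.or φ ψ)))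
  | dual1 : ∀ {φ}, BPrf Ax (impl (.dia φ) (neg (.box (neg φ))))
  | dual2 : ∀ {φ}, BPrf Ax (impl (neg (.box (neg φ))) (.dia φ))
  | mp : ∀ {φ ψ}, BPrf Ax (impl φ ψ) → BPrf Ax φ → BPrf Ax ψ
  | mono : ∀ {φ ψ}, BPrf Ax (impl φ ψ) → BPrf Ax (impl (.dia φ) (.dia ψ))
  | monoBox : ∀ {φ ψ}, BPrf Ax (impl φ ψ) → BPrf Ax (impl (.box φ) (.box ψ))
  | nec : ∀ {φ}, BPrf Ax φ → BPrf Ax (.box φ)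
  | usubst : ∀ {φ x ψ}, BPrf Ax φ → BPrf Ax (subst φ x ψ)

/-- the μ_c-logic axiomatised by `Ax` : the least extension of `μ_c K` by the axioms
`Ax` closed under the rules -/
inductive Prf (Ax : Set Formula) : Formula → Prop
  | ax : ∀ {φ}, φ ∈ Ax → Prf Ax φ
  | taut : ∀ {φ}, (∀ v, beval v φ = true) → Prf Ax φ
  | norm : Prf Ax (neg (.dia bot))
  | addL : ∀ {φ ψ}, Prf Ax (impl (.dia (.or φ ψ)) (.or (.dia φ) (.dia ψ)))
  | addR : ∀ {φ ψ}, Prf Ax (impl (.or (.dia φ) (.dia ψ)) (.dia (.or φ ψ)))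
  | dual1 : ∀ {φ}, Prf Ax (impl (.dia φ) (neg (.box (neg φ))))
  | dual2 : ∀ {φ}, Prf Ax (impl (neg (.box (neg φ))) (.dia φ))
  | mp : ∀ {φ ψ}, Prf Ax (impl φ ψ) → Prf Ax φ → Prf Ax ψ
  | mono : ∀ {φ ψ}, Prf Ax (impl φ ψ) → Prf Ax (impl (.dia φ) (.dia ψ))
  | monoBox : ∀ {φ ψ}, Prf Ax (impl φ ψ) → Prf Ax (impl (.box φ) (.box ψ))
  | nec : ∀ {φ}, Prf Ax φ → Prf Ax (.box φ)
  | usubst : ∀ {φ x ψ}, Prf Ax φ → Prf Ax (subst φ x ψ)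
  | prefixAx : ∀ {x φ}, ContIn ({x} : Set ℕ) φ → Prf Ax (impl (subst φ x (.mu x φ)) (.mu x φ))
  | lfp : ∀ {x φ γ}, ContIn ({x} : Set ℕ) φ → Prf Ax (impl (subst φ x γ) γ) → Prf Ax (impl (.mu x φ) γ)
  | postfixAx : ∀ {x φ}, CoconIn ({x} : Set ℕ) φ → Prf Ax (impl (.nu x φ) (subst φ x (.nu x φ)))
  | gfp : ∀ {x φ γ}, CoconIn ({x} : Set ℕ) φ → Prf Ax (impl γ (subst φ x γ)) → Prf Ax (impl γ (.nu x φ))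

/- ########  Consistency and (finitary) canonical models  ######## -/

def conjList : List Formula → Formula
  | [] => top
  | φ :: l => .and φ (conjList l)

/-- `Γ` is inconsistent wrt a provability predicate `P` -/
def Incons (P : Formula → Prop) (Γ : Set Formula) : Prop :=
  ∃ l : List Formula, (∀ φ ∈ l, φ ∈ Γ) ∧ P (impl (conjList l) bot)

def Cons (P : Formula → Prop) (Γ : Set Formula) : Prop := ¬ Incons P Γ

def MaxCons (P : Formula → Prop) (Γ : Set Formula) : Prop :=
  Cons P Γ ∧ ∀ Γ' : Set Formula, Γ ⊂ Γ' → Incons P Γ'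

/-- consistency of a single formula -/
def ConsF (P : Formula → Prop) (φ : Formula) : Prop := Cons P {φ}

/-- `ψ_A` : the conjunction of a finite set of formulas -/
noncomputable def conjF (A : Finset Formula) : Formula := conjList A.toList

/-- `ψ_U` : the disjunction of the conjunctions of the members of `U` -/
noncomputable def disjF (U : Finset (Finset Formula)) : Formula :=
  (U.toList.map conjF).foldr .or bot

/-- `∼`-closed and FL-closed -/
def NegFLClosed (Sg : Finset Formula) : Prop :=
  FLClosed ↑Sg ∧ ∀ φ ∈ Sg, neg φ ∈ Sg

/-- the states of a model over `Sg` : intersections of maximally consistent sets with `Sg` -/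
def States (P : Formula → Prop) (Sg : Finset Formula) : Set (Finset Formula) :=
  {A | ∃ Γ : Set Formula, MaxCons P Γ ∧ ↑A = Γ ∩ ↑Sg}

/-- a model over `Sg` with respect to the logic `P` -/
structure ModelOver (P : Formula → Prop) (Sg : Finset Formula) where
  R : Finset Formula → Finset Formula → Prop
  rmin : ∀ A ∈ States P Sg, ∀ B ∈ States P Sg,
      ConsF P (.and (conjF A) (.dia (conjF B))) → R A B
  rmax : ∀ A ∈ States P Sg, ∀ B ∈ States P Sg, R A B →
      ∀ φ, Formula.box φ ∈ Sg → Formula.box φ ∈ A → φ ∈ B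

/-- the Kripke model induced by a model over `Sg` -/
noncomputable def modelOf (P : Formula → Prop) (Sg : Finset Formula)
    (M : ModelOver P Sg) : KModel :=
  ⟨{A : Finset Formula // A ∈ States P Sg}, fun A B => M.R A.1 B.1,
   fun p => {A | Formula.atom p ∈ A.1}⟩

/-- the canonical frame of the logic `P` -/
def canFrame (P : Formula → Prop) : KFrame :=
  ⟨{Γ : Set Formula // MaxCons P Γ}, fun Γ Δ => ∀ φ, Formula.box φ ∈ Γ.1 → φ ∈ Δ.1⟩

/-- the canonical model of the logic `P`, with an arbitrary valuation `V` -/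
def canModelWith (P : Formula → Prop) (V : ℕ → Set {Γ : Set Formula // MaxCons P Γ}) :
    KModel :=
  ⟨{Γ : Set Formula // MaxCons P Γ}, fun Γ Δ => ∀ φ, Formula.box φ ∈ Γ.1 → φ ∈ Δ.1, V⟩

/-- the canonical model of the logic `P` -/
def canModel (P : Formula → Prop) : KModel :=
  canModelWith P (fun p => {Γ | Formula.atom p ∈ Γ.1})

/- ########  Expansions and name-expansions  ######## -/

/-- iterated substitution `φ[β₁/x₁]⋯[βₙ/xₙ]` -/
def expandBy : List (ℕ × Formula) → Formula → Formula
  | [], φ => φ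
  | (x, β) :: l, φ => expandBy l (subst φ x β)

/-- an enumeration of the bound variables of `ξ`, paired with their fixpoint formulas,
respecting the dependency order -/
structure GoodEnum (ξ : Formula) (l : List (ℕ × Formula)) : Prop where
  nodup : (l.map Prod.fst).Nodup
  mem : ∀ x, x ∈ l.map Prod.fst ↔ x ∈ bv ξ
  bind : ∀ p ∈ l, (∃ δ, p.2 = Formula.mu p.1 δ ∧ Subf p.2 ξ) ∨
                  (∃ δ, p.2 = Formula.nu p.1 δ ∧ Subf p.2 ξ)
  resp : ∀ i j : Fin l.length, dep ξ (l.get i).1 (l.get j).1 → (i : ℕ) < (j : ℕ)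

/-- the body `δ` of a fixpoint formula `ηx.δ` -/
def body : Formula → Formula
  | .mu _ δ => δ
  | .nu _ δ => δ
  | φ => φ

/-- name-expansion: substitute `u x` for each bound variable `x` in the list -/
def nexpBy (u : ℕ → Formula) : List ℕ → Formula → Formula
  | [], φ => φ
  | x :: l, φ => nexpBy u l (subst φ x (u x))

/-!
Along Fischer–Ladner steps free variables can only disappear, so by induction on their number it
suffices to bound the formulas reachable from `e` while the free variables stay equal to
`K = fv e`. At this level a fixpoint formula `ηz.δ` is unfolded only when `z ∉ K`, and every
formula substituted for `z` has free variables exactly `K`, so it is left untouched by the later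
unfoldings. Hence each formula at this level arises from a subformula of `e` by dualising
connectives, flipping literals and replacing literal occurrences of bound variables by finitely
many such values (`flApprox`).
-/

theorem Relation.finite_setOf_reflTransGen {α : Type*} {r : α → α → Prop} (μ : α → ℕ)
    (hr : ∀ a, {b | r a b}.Finite) (hμ : ∀ a b, r a b → μ b ≤ μ a)
    (hlevel : ∀ a, {b | ReflTransGen (fun x y => r x y ∧ μ y = μ a) a b}.Finite) (a : α) :
    {b | ReflTransGen r a b}.Finite := by
  induction hn : μ a using Nat.strong_induction_on generalizing a with
  | _ n ih =>
  set L := {b | ReflTransGen (fun x y => r x y ∧ μ y = μ a) a b}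
  have hL : ∀ b ∈ L, μ b = μ a := fun b hb => by
    induction hb with
    | refl => rfl
    | tail _ h _ => exact h.2
  have hsub : {b | ReflTransGen r a b} ⊆
      L ∪ ⋃ b ∈ L, ⋃ c ∈ {c | r b c ∧ μ c < μ a}, {d | ReflTransGen r c d} := by
    intro d hd
    induction hd with
    | refl => exact Or.inl .refl
    | tail _ hcd ih =>
      rcases ih with hb | hb
      · rcases (hμ _ _ hcd).trans_eq (hL _ hb) |>.eq_or_lt with h | h
        · exact Or.inl (hb.tail ⟨hcd, h⟩)
        · exact Or.inr (Set.mem_biUnion hb (Set.mem_biUnion ⟨hcd, h⟩ .refl))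
      · obtain ⟨b, hb, hd⟩ := Set.mem_iUnion₂.1 hb
        obtain ⟨c, hc, hd⟩ := Set.mem_iUnion₂.1 hd
        exact Or.inr (Set.mem_biUnion hb (Set.mem_biUnion hc (hd.tail hcd)))
  refine ((hlevel a).union ((hlevel a).biUnion fun b _ => ?_)).subset hsub
  exact ((hr b).subset fun c hc => hc.1).biUnion fun c hc => ih _ (hn ▸ hc.2) c rfl

namespace Formula

open Function Finset Relation

inductive Step : Formula → Formula → Prop
  | natom (p) : Step (.natom p) (.atom p)
  | orL (φ ψ) : Step (.or φ ψ) φ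
  | orR (φ ψ) : Step (.or φ ψ) ψ
  | andL (φ ψ) : Step (.and φ ψ) φ
  | andR (φ ψ) : Step (.and φ ψ) ψ
  | dia (φ) : Step (.dia φ) φ
  | box (φ) : Step (.box φ) φ
  | mu (x φ) : Step (.mu x φ) (subst φ x (.mu x φ))
  | nu (x φ) : Step (.nu x φ) (subst φ x (.nu x φ))

theorem finite_setOf_step (φ : Formula) : {ψ | Step φ ψ}.Finite := by
  cases φ with
  | or a b | and a b => exact (Set.toFinite {a, b}).subset (by rintro ψ ⟨⟩ <;> simp)
  | _ => exact Set.Subsingleton.finite (by rintro _ ⟨⟩ _ ⟨⟩ <;> rfl)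

theorem fv_negF (X : Finset ℕ) (φ : Formula) : fv (negF X φ) = fv φ := by
  induction φ generalizing X <;> simp only [negF, fv, *] <;> split_ifs <;> rfl

theorem fv_neg (φ : Formula) : fv (neg φ) = fv φ := fv_negF ∅ φ

theorem fv_subst_subset (φ : Formula) (x : ℕ) (ψ : Formula) :
    fv (subst φ x ψ) ⊆ fv φ \ {x} ∪ fv ψ := by
  induction φ with
  | atom p | natom p =>
    simp only [subst]
    split_ifs with h <;> simp [fv, fv_neg, h]
  | or a b iha ihb | and a b iha ihb =>
    simp only [subst, fv]
    grind
  | dia a ih | box a ih => simpa only [subst, fv] using ih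
  | mu y a ih | nu y a ih =>
    simp only [subst]
    split_ifs with h
    · simp [fv, h]
    · simp only [fv]
      grind

theorem subst_eq_self_of_notMem_fv {φ : Formula} {x : ℕ} (ψ : Formula) (h : x ∉ fv φ) :
    subst φ x ψ = φ := by
  induction φ with
  | atom p | natom p => simp_all [fv, subst, eq_comm]
  | or a b iha ihb | and a b iha ihb => simp_all [fv, subst]
  | dia a ih | box a ih => simp_all [fv, subst]
  | mu y a ih | nu y a ih =>
    simp only [fv, mem_sdiff, mem_singleton, not_and, not_not] at h
    by_cases hy : y = x
    · simp [subst, hy]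
    · simp [subst, hy, ih fun hx => hy (h hx).symm]

theorem Step.fv_subset {φ ψ : Formula} (h : Step φ ψ) : fv ψ ⊆ fv φ := by
  cases h with
  | mu x a | nu x a => exact (fv_subst_subset a x _).trans (by simp [fv])
  | _ => simp [fv]

def instances (V : ℕ → Finset Formula) : Formula → Finset Formula
  | .atom p | .natom p => {.atom p, .natom p} ∪ V p
  | .or a b | .and a b =>
    (instances V a ×ˢ instances V b).biUnion fun c => {.or c.1 c.2, .and c.1 c.2}
  | .dia a | .box a => (instances V a).biUnion fun a' => {.dia a', .box a'}
  | .mu z a | .nu z a => (instances (update V z ∅) a).biUnion fun a' => {.mu z a', .nu z a'}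

theorem mem_instances_self (V : ℕ → Finset Formula) (φ : Formula) : φ ∈ instances V φ := by
  induction φ generalizing V <;> simp_all [instances]

def NegFClosed (S : Finset Formula) : Prop := ∀ u ∈ S, ∀ X, negF X u ∈ S

theorem negF_mem_instances {V : ℕ → Finset Formula} (hV : ∀ q, NegFClosed (V q))
    {φ w : Formula} (hw : w ∈ instances V φ) (X : Finset ℕ) : negF X w ∈ instances V φ := by
  induction φ generalizing V w X with
  | atom p | natom p =>
    simp only [instances, mem_union, mem_insert, mem_singleton] at hw ⊢
    rcases hw with (rfl | rfl) | hw
    · by_cases p ∈ X <;> simp [negF, *]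
    · by_cases p ∈ X <;> simp [negF, *]
    · exact Or.inr (hV p w hw X)
  | or a b iha ihb | and a b iha ihb =>
    simp only [instances, mem_biUnion, mem_product, mem_insert, mem_singleton] at hw ⊢
    obtain ⟨⟨a', b'⟩, ⟨ha, hb⟩, hw⟩ := hw
    exact ⟨⟨negF X a', negF X b'⟩, ⟨iha hV ha X, ihb hV hb X⟩,
      by rcases hw with rfl | rfl <;> simp [negF]⟩
  | dia a ih | box a ih =>
    simp only [instances, mem_biUnion, mem_insert, mem_singleton] at hw ⊢
    obtain ⟨a', ha, hw⟩ := hw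
    exact ⟨negF X a', ih hV ha X, by rcases hw with rfl | rfl <;> simp [negF]⟩
  | mu z a ih | nu z a ih =>
    simp only [instances, mem_biUnion, mem_insert, mem_singleton] at hw ⊢
    obtain ⟨a', ha, hw⟩ := hw
    have hV' : ∀ q, NegFClosed (update V z ∅ q) :=
      (forall_update_iff V fun _ S => NegFClosed S).2 ⟨by simp [NegFClosed], fun q _ => hV q⟩
    exact ⟨negF (insert z X) a', ih hV' ha _, by rcases hw with rfl | rfl <;> simp [negF]⟩

theorem subst_mem_instances {z : ℕ} {W : Finset Formula} {v : Formula} (hv : v ∈ W)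
    (hnv : neg v ∈ W) {V : ℕ → Finset Formula} (hVz : V z = ∅) (hV : ∀ q, ∀ u ∈ V q, z ∉ fv u)
    {φ w : Formula} (hw : w ∈ instances V φ) : subst w z v ∈ instances (update V z W) φ := by
  induction φ generalizing V w with
  | atom p | natom p =>
    simp only [instances, mem_union, mem_insert, mem_singleton] at hw ⊢
    rcases hw with (rfl | rfl) | hw
    · by_cases hp : p = z
      · subst hp; simp [subst, hv]
      · simp [subst, hp]
    · by_cases hp : p = z
      · subst hp; simp [subst, hnv]
      · simp [subst, hp]
    · have hp : p ≠ z := by rintro rfl; simp [hVz] at hw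
      simp [subst_eq_self_of_notMem_fv v (hV p w hw), hp, hw]
  | or a b iha ihb | and a b iha ihb =>
    simp only [instances, mem_biUnion, mem_product, mem_insert, mem_singleton] at hw ⊢
    obtain ⟨⟨a', b'⟩, ⟨ha, hb⟩, hw⟩ := hw
    exact ⟨⟨subst a' z v, subst b' z v⟩, ⟨iha hVz hV ha, ihb hVz hV hb⟩,
      by rcases hw with rfl | rfl <;> simp [subst]⟩
  | dia a ih | box a ih =>
    simp only [instances, mem_biUnion, mem_insert, mem_singleton] at hw ⊢
    obtain ⟨a', ha, hw⟩ := hw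
    exact ⟨subst a' z v, ih hVz hV ha, by rcases hw with rfl | rfl <;> simp [subst]⟩
  | mu y a ih | nu y a ih =>
    simp only [instances, mem_biUnion, mem_insert, mem_singleton] at hw ⊢
    obtain ⟨a', ha, hw⟩ := hw
    by_cases hyz : y = z
    · subst hyz
      exact ⟨a', by rwa [update_idem], by rcases hw with rfl | rfl <;> simp [subst]⟩
    · have hV' : ∀ q, ∀ u ∈ update V y ∅ q, z ∉ fv u :=
        (forall_update_iff V fun _ S => ∀ u ∈ S, z ∉ fv u).2 ⟨by simp, fun q _ => hV q⟩
      refine ⟨subst a' z v, ?_, by rcases hw with rfl | rfl <;> simp [subst, hyz]⟩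
      rw [update_comm (Ne.symm hyz)]
      exact ih (by simp [update_of_ne (Ne.symm hyz), hVz]) hV' ha

structure Admissible (K : Finset ℕ) (S : Finset Formula) : Prop where
  fv_eq : ∀ u ∈ S, fv u = K
  negFClosed : NegFClosed S

def fixValues (K : Finset ℕ) (V : ℕ → Finset Formula) (z : ℕ) (a : Formula) : Finset Formula :=
  (instances V (.mu z a)).filter fun u => fv u = K

section
variable {K : Finset ℕ} {V : ℕ → Finset Formula}

theorem admissible_fixValues (hV : ∀ q, Admissible K (V q)) (z : ℕ) (a : Formula) :
    Admissible K (fixValues K V z a) where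
  fv_eq _ hu := (mem_filter.1 hu).2
  negFClosed u hu X := by
    obtain ⟨hu, hfv⟩ := mem_filter.1 hu
    exact mem_filter.2 ⟨negF_mem_instances (fun q => (hV q).negFClosed) hu X, by rw [fv_negF, hfv]⟩

theorem step_mem_of_mem_fixValues (hV : ∀ q, Admissible K (V q)) {z : ℕ} {a u s : Formula}
    (hu : u ∈ fixValues K V z a) (hs : Step u s) :
    s ∈ instances (update V z (fixValues K V z a)) a := by
  have hneg : neg u ∈ fixValues K V z a := (admissible_fixValues hV z a).negFClosed u hu ∅
  obtain ⟨hu', hfv⟩ := mem_filter.1 hu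
  simp only [instances, mem_biUnion, mem_insert, mem_singleton] at hu'
  obtain ⟨a', ha, rfl | rfl⟩ := hu' <;> cases hs <;>
  · have hz : z ∉ K := hfv ▸ by simp [fv]
    have hV' : ∀ q, ∀ v ∈ update V z ∅ q, z ∉ fv v :=
      (forall_update_iff V fun _ S => ∀ v ∈ S, z ∉ fv v).2
        ⟨by simp, fun q _ v hv => (hV q).fv_eq v hv ▸ hz⟩
    simpa using subst_mem_instances hu hneg (by simp) hV' ha

end

/-- An over-approximation of the formulas reachable from `φ` by steps that keep the free variables
equal to `K`, when the variables bound above `φ` are unfolded into the values `V`. -/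
def flApprox (K : Finset ℕ) : (ℕ → Finset Formula) → Formula → Finset Formula
  | V, φ@(.atom _) | V, φ@(.natom _) => instances V φ
  | V, φ@(.or a b) | V, φ@(.and a b) => instances V φ ∪ flApprox K V a ∪ flApprox K V b
  | V, φ@(.dia a) | V, φ@(.box a) => instances V φ ∪ flApprox K V a
  | V, φ@(.mu z a) | V, φ@(.nu z a) => instances V φ ∪ flApprox K (update V z (fixValues K V z a)) a

theorem instances_subset_flApprox (K : Finset ℕ) (V : ℕ → Finset Formula) (φ : Formula) :
    instances V φ ⊆ flApprox K V φ := by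
  cases φ <;> simp [flApprox, union_assoc]

section
variable {K : Finset ℕ} {T : Finset Formula} {V : ℕ → Finset Formula}

theorem step_mem_of_mem_instances (hV : ∀ q, Admissible K (V q))
    (hVT : ∀ q, ∀ u ∈ V q, ∀ s, Step u s → s ∈ T) {φ m s : Formula} (hT : flApprox K V φ ⊆ T)
    (hm : m ∈ instances V φ) (hfv : fv m = K) (hs : Step m s) : s ∈ T := by
  cases φ with
  | atom p | natom p =>
    simp only [instances, mem_union, mem_insert, mem_singleton] at hm
    rcases hm with (rfl | rfl) | hm
    · cases hs
    · cases hs; exact hT (instances_subset_flApprox _ _ _ (by simp [instances]))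
    · exact hVT p m hm s hs
  | or a b | and a b =>
    simp only [instances, mem_biUnion, mem_product, mem_insert, mem_singleton] at hm
    obtain ⟨⟨a', b'⟩, ⟨ha, hb⟩, rfl | rfl⟩ := hm <;> cases hs <;>
      apply hT <;> simp [flApprox, instances_subset_flApprox _ _ _ ha,
        instances_subset_flApprox _ _ _ hb]
  | dia a | box a =>
    simp only [instances, mem_biUnion, mem_insert, mem_singleton] at hm
    obtain ⟨a', ha, rfl | rfl⟩ := hm <;> cases hs <;>
      apply hT <;> simp [flApprox, instances_subset_flApprox _ _ _ ha]
  | mu z a | nu z a =>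
    have hm : m ∈ fixValues K V z a := mem_filter.2 ⟨hm, hfv⟩
    apply hT
    simp [flApprox, instances_subset_flApprox _ _ _ (step_mem_of_mem_fixValues hV hm hs)]

theorem step_mem_of_mem_flApprox (hV : ∀ q, Admissible K (V q))
    (hVT : ∀ q, ∀ u ∈ V q, ∀ s, Step u s → s ∈ T) {φ m s : Formula} (hT : flApprox K V φ ⊆ T)
    (hm : m ∈ flApprox K V φ) (hfv : fv m = K) (hs : Step m s) : s ∈ T := by
  induction φ generalizing V with
  | atom p | natom p => exact step_mem_of_mem_instances hV hVT hT hm hfv hs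
  | or a b iha ihb | and a b iha ihb =>
    simp only [flApprox, mem_union] at hm
    rcases hm with (hm | hm) | hm
    · exact step_mem_of_mem_instances hV hVT hT hm hfv hs
    · exact iha hV hVT (fun x hx => hT (by simp [flApprox, hx])) hm
    · exact ihb hV hVT (fun x hx => hT (by simp [flApprox, hx])) hm
  | dia a ih | box a ih =>
    simp only [flApprox, mem_union] at hm
    rcases hm with hm | hm
    · exact step_mem_of_mem_instances hV hVT hT hm hfv hs
    · exact ih hV hVT (fun x hx => hT (by simp [flApprox, hx])) hm
  | mu z a ih | nu z a ih =>
    simp only [flApprox, mem_union] at hm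
    rcases hm with hm | hm
    · exact step_mem_of_mem_instances hV hVT hT hm hfv hs
    have hT' : flApprox K (update V z (fixValues K V z a)) a ⊆ T :=
      fun x hx => hT (by simp [flApprox, hx])
    refine ih ((forall_update_iff V fun _ S => Admissible K S).2
      ⟨admissible_fixValues hV z a, fun q _ => hV q⟩) ?_ hT' hm
    refine (forall_update_iff V fun _ S => ∀ u ∈ S, ∀ s, Step u s → s ∈ T).2 ⟨?_, fun q _ => hVT q⟩
    exact fun u hu s hs => hT' (instances_subset_flApprox _ _ _ (step_mem_of_mem_fixValues hV hu hs))

end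

theorem mem_flApprox_of_reflTransGen {e s : Formula}
    (h : ReflTransGen (fun φ ψ => Step φ ψ ∧ #(fv ψ) = #(fv e)) e s) :
    s ∈ flApprox (fv e) (fun _ => ∅) e ∧ fv s = fv e := by
  induction h with
  | refl => exact ⟨instances_subset_flApprox _ _ _ (mem_instances_self _ e), rfl⟩
  | tail _ hms ih =>
    obtain ⟨hm, hfv⟩ := ih
    refine ⟨step_mem_of_mem_flApprox (fun _ => ⟨by simp, by simp [NegFClosed]⟩) (by simp)
      subset_rfl hm hfv hms.1, ?_⟩
    exact eq_of_subset_of_card_le (hfv ▸ hms.1.fv_subset) hms.2.ge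

theorem finite_setOf_reflTransGen_step (e : Formula) : {s | ReflTransGen Step e s}.Finite :=
  finite_setOf_reflTransGen (fun φ => #(fv φ)) finite_setOf_step
    (fun _ _ h => card_le_card h.fv_subset)
    (fun e => (flApprox (fv e) (fun _ => ∅) e).finite_toSet.subset
      fun _ hs => (mem_flApprox_of_reflTransGen hs).1) e

end Formula

theorem FL.exists_reflTransGen_step {Φ : Set Formula} {ψ : Formula} (h : FL Φ ψ) :
    ∃ φ ∈ Φ, Relation.ReflTransGen Formula.Step φ ψ := by
  induction h with
  | base h => exact ⟨_, h, .refl⟩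
  | natom _ ih | orL _ ih | orR _ ih | andL _ ih | andR _ ih | dia _ ih | box _ ih | mu _ ih
  | nu _ ih =>
    obtain ⟨φ, hφ, h⟩ := ih
    exact ⟨φ, hφ, h.tail (by constructor)⟩

/-- The Fischer-Ladner closure of a finite set of modal μ-calculus
formulas is finite. -/
theorem FL_closure_finite (Φ : Set Formula) (hΦ : Φ.Finite) : (Cl Φ).Finite := by
  refine (hΦ.biUnion fun φ _ => finite_setOf_reflTransGen_step φ).subset fun ψ hψ => ?_
  obtain ⟨φ, hφ, h⟩ := FL.exists_reflTransGen_step hψ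
  exact Set.mem_biUnion hφ h
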